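/- arXiv:2211.01495 — 4 statements merged into one kernel-verified Lean document; each statement's English description precedes it below -/
import Mathlib

section
/- Let G be a finite simple graph in which every vertex has positive degree, and let x, y be adjacent vertices with N(x) \ {y} = N(y) \ {x} (connected twins) and common degree d = d_x = d_y. Let v be the vector with v_x = 1/√2, v_y = −1/√2, and v_z = 0 for all other vertices z. Then L v = ((d+1)/d) v, i.e., (d+1)/d is an eigenvalue of the normalized Laplacian L. Moreover, for every finite orthonormal family v_1, …, v_k of eigenvectors of L with eigenvalue (d+1)/d such that v_1 = v, one has (1/k) Σ_{i=1}^k F(v_i, (d+1)/d, {x,y}) ≤ (1/k)·(d−1)/d². -/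
open Finset

variable {V : Type*} [Fintype V] [DecidableEq V]

/-- The normalized Laplacian `L = I - D^{-1/2} A D^{-1/2}` of a simple graph. -/
noncomputable def normLap (G : SimpleGraph V) [DecidableRel G.Adj] : Matrix V V ℝ :=
  fun x y =>
    if x = y then 1
    else if G.Adj x y then -(1 / Real.sqrt ((G.degree x : ℝ) * (G.degree y : ℝ)))
    else 0

/-- The Aksoy–Purvine–Young edge-derivative expression
`F(v, λ, {x,y}) = (1-λ)(v_x²/d_x + v_y²/d_y) − 2 v_x v_y / √(d_x d_y)`. -/
noncomputable def edgeDeriv (G : SimpleGraph V) [DecidableRel G.Adj]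
    (v : V → ℝ) (lam : ℝ) (x y : V) : ℝ :=
  (1 - lam) * (v x ^ 2 / (G.degree x : ℝ) + v y ^ 2 / (G.degree y : ℝ))
    - 2 * (v x * v y) / Real.sqrt ((G.degree x : ℝ) * (G.degree y : ℝ))

/-!
Twins satisfy `L_{zx} = L_{zy}` for every other vertex `z`, so `e_x - e_y` is an eigenvector
with eigenvalue `1 + 1/d`. Every other member of an orthonormal eigenbasis is orthogonal to it,
hence takes equal values `a` at `x` and `y`, and on such a vector the edge derivative is
`-2 λ a² / d ≤ 0`. So only `v` itself contributes, and it contributes `(d - 1) / d²`.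
-/

theorem dotProduct_eq_of_pair_supported {ι R : Type*} [Fintype ι] [NonUnitalNonAssocSemiring R]
    {x y : ι} {v : ι → R} (hxy : x ≠ y) (hv : ∀ z, z ≠ x → z ≠ y → v z = 0) (u : ι → R) :
    u ⬝ᵥ v = u x * v x + u y * v y :=
  sum_eq_add_of_mem x y (mem_univ x) (mem_univ y) hxy fun z _ hz => by
    rw [hv z hz.1 hz.2, mul_zero]

theorem apply_eq_apply_of_dotProduct_eq_zero {ι : Type*} [Fintype ι] {x y : ι} {a : ℝ}
    {v : ι → ℝ} (hxy : x ≠ y) (ha : a ≠ 0)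
    (hvx : v x = a) (hvy : v y = -a) (hv : ∀ z, z ≠ x → z ≠ y → v z = 0)
    {w : ι → ℝ} (hwv : w ⬝ᵥ v = 0) : w x = w y := by
  rw [dotProduct_eq_of_pair_supported hxy hv, hvx, hvy] at hwv
  have : (w x - w y) * a = 0 := by linarith
  exact sub_eq_zero.mp ((mul_eq_zero.mp this).resolve_right ha)

section NormalizedLaplacian

variable (G : SimpleGraph V) [DecidableRel G.Adj] {x y : V}

theorem normLap_apply_self (z : V) : normLap G z z = 1 := by
  simp [normLap]

theorem normLap_apply_of_adj {z z' : V} (h : G.Adj z z') :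
    normLap G z z' = -(1 / Real.sqrt ((G.degree z : ℝ) * G.degree z')) := by
  simp [normLap, h.ne, h]

theorem adj_iff_adj_of_neighborFinset_sdiff_eq
    (htwin : G.neighborFinset x \ {y} = G.neighborFinset y \ {x}) {z : V}
    (hzx : z ≠ x) (hzy : z ≠ y) : G.Adj z x ↔ G.Adj z y := by
  simpa [SimpleGraph.mem_neighborFinset, hzx, hzy, G.adj_comm z] using
    Finset.ext_iff.mp htwin z

theorem normLap_apply_eq_of_twins
    (htwin : G.neighborFinset x \ {y} = G.neighborFinset y \ {x})
    (hd : G.degree x = G.degree y) {z : V} (hzx : z ≠ x) (hzy : z ≠ y) :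
    normLap G z x = normLap G z y := by
  simp [normLap, hzx, hzy, hd, adj_iff_adj_of_neighborFinset_sdiff_eq G htwin hzx hzy]

theorem normLap_mulVec_eq_of_twins {a : ℝ} {v : V → ℝ} (hxy : G.Adj x y)
    (htwin : G.neighborFinset x \ {y} = G.neighborFinset y \ {x})
    {d : ℕ} (hdx : G.degree x = d) (hdy : G.degree y = d)
    (hvx : v x = a) (hvy : v y = -a) (hv : ∀ z, z ≠ x → z ≠ y → v z = 0) :
    (normLap G).mulVec v = (((d : ℝ) + 1) / d) • v := by
  have hd : (d : ℝ) ≠ 0 := Nat.cast_ne_zero.mpr (hdx ▸ hxy.degree_pos_left).ne'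
  have hsqrt : Real.sqrt ((d : ℝ) * d) = d := Real.sqrt_mul_self d.cast_nonneg
  funext z
  rw [Matrix.mulVec, dotProduct_eq_of_pair_supported hxy.ne hv, Pi.smul_apply, smul_eq_mul]
  by_cases hzx : z = x
  · subst hzx
    rw [normLap_apply_self, normLap_apply_of_adj G hxy, hdx, hdy, hsqrt, hvx, hvy]
    field_simp
  by_cases hzy : z = y
  · subst hzy
    rw [normLap_apply_self, normLap_apply_of_adj G hxy.symm, hdx, hdy, hsqrt, hvx, hvy]
    field_simp
    ring
  rw [normLap_apply_eq_of_twins G htwin (hdx.trans hdy.symm) hzx hzy, hv z hzx hzy, hvx, hvy]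
  ring

end NormalizedLaplacian

section EdgeDerivative

variable {W : Type*} [Fintype W] (G : SimpleGraph W) [DecidableRel G.Adj] {x y : W} {d : ℕ}

theorem edgeDeriv_of_apply_eq_neg (hdx : G.degree x = d) (hdy : G.degree y = d)
    {v : W → ℝ} {a : ℝ} (hvx : v x = a) (hvy : v y = -a) (lam : ℝ) :
    edgeDeriv G v lam x y = 2 * (2 - lam) * a ^ 2 / d := by
  rw [edgeDeriv, hdx, hdy, Real.sqrt_mul_self d.cast_nonneg, hvx, hvy]
  ring

theorem edgeDeriv_nonpos_of_apply_eq (hdx : G.degree x = d) (hdy : G.degree y = d)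
    {w : W → ℝ} (hw : w x = w y) {lam : ℝ} (hlam : 0 ≤ lam) :
    edgeDeriv G w lam x y ≤ 0 := by
  have hF : edgeDeriv G w lam x y = -(2 * lam * w x ^ 2 / d) := by
    rw [edgeDeriv, hdx, hdy, Real.sqrt_mul_self d.cast_nonneg, ← hw]
    ring
  rw [hF, neg_nonpos]
  positivity

end EdgeDerivative

theorem connected_twins_edge_derivative_general
    (G : SimpleGraph V) [DecidableRel G.Adj]
    (x y : V) (hxy : G.Adj x y)
    (htwin : G.neighborFinset x \ {y} = G.neighborFinset y \ {x})
    (d : ℕ) (hdx : G.degree x = d) (hdy : G.degree y = d)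
    (v : V → ℝ)
    (hv : ∀ z, v z = if z = x then 1 / Real.sqrt 2
      else if z = y then -(1 / Real.sqrt 2) else 0) :
    (normLap G).mulVec v = (((d : ℝ) + 1) / d) • v ∧
      ∀ (k : ℕ) (hk : 0 < k) (w : Fin k → V → ℝ),
        w ⟨0, hk⟩ = v →
        (∀ i j, (∑ z, w i z * w j z) = if i = j then 1 else 0) →
        (∀ i, (normLap G).mulVec (w i) = (((d : ℝ) + 1) / d) • w i) →
        (1 / (k : ℝ)) * ∑ i, edgeDeriv G (w i) (((d : ℝ) + 1) / d) x y ≤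
          (1 / (k : ℝ)) * (((d : ℝ) - 1) / (d : ℝ) ^ 2) := by
  have hvx : v x = 1 / Real.sqrt 2 := by simp [hv]
  have hvy : v y = -(1 / Real.sqrt 2) := by simp [hv, hxy.ne']
  have hv0 : ∀ z, z ≠ x → z ≠ y → v z = 0 := fun z hzx hzy => by simp [hv, hzx, hzy]
  refine ⟨normLap_mulVec_eq_of_twins G hxy htwin hdx hdy hvx hvy hv0, ?_⟩
  intro k hk w hw0 horth _
  set i₀ : Fin k := ⟨0, hk⟩
  have hd : (d : ℝ) ≠ 0 := Nat.cast_ne_zero.mpr (hdx ▸ hxy.degree_pos_left).ne'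
  have hF₀ : edgeDeriv G (w i₀) (((d : ℝ) + 1) / d) x y = ((d : ℝ) - 1) / d ^ 2 := by
    rw [hw0, edgeDeriv_of_apply_eq_neg G hdx hdy hvx hvy, div_pow, Real.sq_sqrt zero_le_two]
    field_simp
    ring
  have hF : ∀ i ∈ univ.erase i₀, edgeDeriv G (w i) (((d : ℝ) + 1) / d) x y ≤ 0 := by
    intro i hi
    have horth_v : w i ⬝ᵥ v = 0 := hw0 ▸ (horth i i₀).trans (if_neg (ne_of_mem_erase hi))
    refine edgeDeriv_nonpos_of_apply_eq G hdx hdy ?_ (by positivity)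
    exact apply_eq_apply_of_dotProduct_eq_zero hxy.ne (by positivity) hvx hvy hv0 horth_v
  rw [← add_sum_erase _ _ (mem_univ i₀), hF₀]
  gcongr
  exact add_le_of_nonpos_right (sum_nonpos hF)

theorem connected_twins_edge_derivative
    (G : SimpleGraph V) [DecidableRel G.Adj]
    (hdeg : ∀ z : V, 0 < G.degree z)
    (x y : V) (hxy : G.Adj x y)
    (htwin : G.neighborFinset x \ {y} = G.neighborFinset y \ {x})
    (d : ℕ) (hdx : G.degree x = d) (hdy : G.degree y = d)
    (v : V → ℝ)
    (hv : ∀ z, v z = if z = x then 1 / Real.sqrt 2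
      else if z = y then -(1 / Real.sqrt 2) else 0) :
    (normLap G).mulVec v = (((d : ℝ) + 1) / d) • v ∧
      ∀ (k : ℕ) (hk : 0 < k) (w : Fin k → V → ℝ),
        w ⟨0, hk⟩ = v →
        (∀ i j, (∑ z, w i z * w j z) = if i = j then 1 else 0) →
        (∀ i, (normLap G).mulVec (w i) = (((d : ℝ) + 1) / d) • w i) →
        (1 / (k : ℝ)) * ∑ i, edgeDeriv G (w i) (((d : ℝ) + 1) / d) x y ≤
          (1 / (k : ℝ)) * (((d : ℝ) - 1) / (d : ℝ) ^ 2) :=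
  connected_twins_edge_derivative_general G x y hxy htwin d hdx hdy v hv
end

section
/- Let G be a finite simple graph in which every vertex has positive degree, and let x, y be adjacent vertices with N(x) \ {y} = N(y) \ {x} (connected twins) and common degree d = d_x = d_y. If λ is an eigenvalue of the normalized Laplacian L with λ ≠ (d+1)/d and w is any eigenvector of L with eigenvalue λ, then the edge-derivative expression satisfies F(w, λ, {x,y}) ≤ 0. -/
/-!
Subtracting the eigenvalue equations of `L` at two connected twins `x`, `y` of common degree `d`,
the sums over their common neighbours cancel and only the edge `xy` survives, leaving
`λ (w_x - w_y) = (1 + 1/d) (w_x - w_y)`. Hence `w_x = w_y` unless `λ = (d+1)/d`, and then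
`F(w, λ, {x,y}) = -2 λ w_x² / d`, which is nonpositive because `L` is positive semidefinite.
-/

open Finset

variable {V : Type*} [Fintype V] [DecidableEq V]

open Matrix

lemma Matrix.PosSemidef.nonneg_of_mulVec_eq_smul {n : Type*} [Fintype n] {M : Matrix n n ℝ}
    (hM : M.PosSemidef) {v : n → ℝ} (hv : v ≠ 0) {μ : ℝ} (h : M *ᵥ v = μ • v) : 0 ≤ μ := by
  have hquad := hM.dotProduct_mulVec_nonneg v
  rw [h, star_trivial, dotProduct_smul, smul_eq_mul] at hquad
  exact nonneg_of_mul_nonneg_left hquad (dotProduct_self_star_pos_iff.mpr hv)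

namespace SimpleGraph

variable (G : SimpleGraph V) [DecidableRel G.Adj]

/-- Isolated vertices contribute the diagonal correction, since `normLap` puts `1` on every
diagonal entry while `(√0)⁻¹ = 0`. -/
lemma normLap_eq_diagonal_mul_lapMatrix_mul_diagonal_add :
    normLap G = diagonal (fun z => (√(G.degree z : ℝ))⁻¹) * G.lapMatrix ℝ *
        diagonal (fun z => (√(G.degree z : ℝ))⁻¹) +
      diagonal (fun z => if G.degree z = 0 then 1 else 0) := by
  ext a b
  simp only [Matrix.add_apply, mul_diagonal, diagonal_mul, lapMatrix, Matrix.sub_apply,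
    degMatrix, diagonal_apply, adjMatrix_apply, normLap]
  rcases eq_or_ne a b with rfl | hab
  · rcases eq_or_ne (G.degree a) 0 with ha | ha
    · simp [ha]
    · have hpos : (0 : ℝ) < G.degree a := by positivity
      simp [ha]
      field_simp
      exact Real.sq_sqrt hpos.le
  · by_cases hadj : G.Adj a b
    · simp [hab, hadj, Real.sqrt_mul (Nat.cast_nonneg _), mul_comm]
    · simp [hab, hadj]

lemma posSemidef_normLap : (normLap G).PosSemidef := by
  rw [normLap_eq_diagonal_mul_lapMatrix_mul_diagonal_add]
  refine PosSemidef.add ?_ (posSemidef_diagonal_iff.mpr fun z => by split_ifs <;> norm_num)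
  simpa [diagonal_conjTranspose] using
    (posSemidef_lapMatrix ℝ G).mul_mul_conjTranspose_same
      (diagonal fun z => (√(G.degree z : ℝ))⁻¹)

lemma normLap_mulVec_apply (w : V → ℝ) (a : V) :
    (normLap G *ᵥ w) a =
      w a - ∑ z ∈ G.neighborFinset a, w z / √((G.degree a : ℝ) * G.degree z) := by
  have hentry : ∀ z, normLap G a z * w z = (if a = z then w a else 0) -
      if G.Adj a z then w z / √((G.degree a : ℝ) * G.degree z) else 0 := by
    intro z
    rcases eq_or_ne a z with rfl | haz
    · simp [normLap]
    · by_cases hadj : G.Adj a z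
      · simp [normLap, haz, hadj]
        ring
      · simp [normLap, haz, hadj]
  simp only [mulVec, dotProduct, hentry, sum_sub_distrib, sum_ite_eq, mem_univ, if_true,
    ← sum_filter, neighborFinset_eq_filter]

lemma normLap_mulVec_apply_sub_of_twins {x y : V} (hxy : G.Adj x y)
    (htwin : G.neighborFinset x \ {y} = G.neighborFinset y \ {x})
    (hdeg : G.degree x = G.degree y) (w : V → ℝ) :
    (normLap G *ᵥ w) x - (normLap G *ᵥ w) y = (1 + 1 / G.degree x) * (w x - w y) := by
  have hNx : G.neighborFinset x = insert y (G.neighborFinset x \ {y}) := by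
    rw [sdiff_singleton_eq_erase, insert_erase ((G.mem_neighborFinset x y).2 hxy)]
  have hNy : G.neighborFinset y = insert x (G.neighborFinset x \ {y}) := by
    rw [htwin, sdiff_singleton_eq_erase, insert_erase ((G.mem_neighborFinset y x).2 hxy.symm)]
  have hsqrt : √((G.degree x : ℝ) * G.degree x) = G.degree x :=
    Real.sqrt_mul_self (Nat.cast_nonneg _)
  rw [normLap_mulVec_apply, normLap_mulVec_apply, hNx, hNy, sum_insert (by simp),
    sum_insert (by simp), ← hdeg, hsqrt]
  ring

lemma eq_of_twins_of_normLap_mulVec_eq_smul {x y : V} (hxy : G.Adj x y)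
    (htwin : G.neighborFinset x \ {y} = G.neighborFinset y \ {x})
    (hdeg : G.degree x = G.degree y) {lam : ℝ} (hlam : lam ≠ ((G.degree x : ℝ) + 1) / G.degree x)
    {w : V → ℝ} (heig : normLap G *ᵥ w = lam • w) : w x = w y := by
  have hx : (G.degree x : ℝ) ≠ 0 := by
    exact_mod_cast (G.degree_pos_iff_exists_adj x).2 ⟨y, hxy⟩ |>.ne'
  have hsub := G.normLap_mulVec_apply_sub_of_twins hxy htwin hdeg w
  rw [heig, Pi.smul_apply, Pi.smul_apply, smul_eq_mul, smul_eq_mul, ← mul_sub] at hsub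
  have hfactor : (lam - ((G.degree x : ℝ) + 1) / G.degree x) * (w x - w y) = 0 := by
    rw [sub_mul, hsub, add_div, div_self hx]
    ring
  exact sub_eq_zero.1 ((mul_eq_zero.1 hfactor).resolve_left (sub_ne_zero.2 hlam))

omit [DecidableEq V] in
lemma edgeDeriv_of_degree_eq_of_eq {w : V → ℝ} {x y : V} (hdeg : G.degree x = G.degree y)
    (hw : w x = w y) (lam : ℝ) :
    edgeDeriv G w lam x y = -(2 * lam * w x ^ 2 / G.degree x) := by
  rw [edgeDeriv, ← hdeg, ← hw, Real.sqrt_mul_self (Nat.cast_nonneg _)]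
  ring

end SimpleGraph

open SimpleGraph in
theorem connected_twins_other_eigenvalues_nonpositive_general
    (G : SimpleGraph V) [DecidableRel G.Adj]
    (x y : V) (hxy : G.Adj x y)
    (htwin : G.neighborFinset x \ {y} = G.neighborFinset y \ {x})
    (d : ℕ) (hdx : G.degree x = d) (hdy : G.degree y = d)
    (lam : ℝ) (hlam : lam ≠ ((d : ℝ) + 1) / d)
    (w : V → ℝ) (hw0 : w ≠ 0)
    (heig : (normLap G).mulVec w = lam • w) :
    edgeDeriv G w lam x y ≤ 0 := by
  subst hdx
  have hlam_nonneg : 0 ≤ lam := (posSemidef_normLap G).nonneg_of_mulVec_eq_smul hw0 heig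
  have hwxy : w x = w y :=
    G.eq_of_twins_of_normLap_mulVec_eq_smul hxy htwin hdy.symm hlam heig
  rw [G.edgeDeriv_of_degree_eq_of_eq hdy.symm hwxy, neg_nonpos]
  positivity

theorem connected_twins_other_eigenvalues_nonpositive
    (G : SimpleGraph V) [DecidableRel G.Adj]
    (hdeg : ∀ z : V, 0 < G.degree z)
    (x y : V) (hxy : G.Adj x y)
    (htwin : G.neighborFinset x \ {y} = G.neighborFinset y \ {x})
    (d : ℕ) (hdx : G.degree x = d) (hdy : G.degree y = d)
    (lam : ℝ) (hlam : lam ≠ ((d : ℝ) + 1) / d)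
    (w : V → ℝ) (hw0 : w ≠ 0)
    (heig : (normLap G).mulVec w = lam • w) :
    edgeDeriv G w lam x y ≤ 0 :=
  connected_twins_other_eigenvalues_nonpositive_general G x y hxy htwin d hdx hdy lam hlam w hw0
    heig
end

section
/- Let G be a finite simple graph in which every vertex has positive degree, and let x, y be distinct non-adjacent vertices with N(x) = N(y) (non-adjacent twins) and common degree d = d_x = d_y. Let v be the vector with v_x = 1/√2, v_y = −1/√2, and v_z = 0 for all other vertices z. Then L v = v, i.e., 1 is an eigenvalue of the normalized Laplacian L; the edge-derivative expression satisfies F(v, 1, {x,y}) = 1/d; and for every finite orthonormal family v_1, …, v_k of eigenvectors of L with eigenvalue 1 such that v_1 = v, one has (1/k) Σ_{i=1}^k F(v_i, 1, {x,y}) ≤ 1/(k d). -/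
open Finset

variable {V : Type*} [Fintype V] [DecidableEq V]

lemma sum_mul_pair {V : Type*} [Fintype V] [DecidableEq V] (x y : V) (hxy : x ≠ y)
    (f : V → ℝ) (a b : ℝ) :
    ∑ z, f z * (if z = x then a else if z = y then b else 0) = f x * a + f y * b := by
  have h : ∀ z : V, f z * (if z = x then a else if z = y then b else 0)
      = (if z = x then f x * a else 0) + (if z = y then f y * b else 0) := by
    intro z
    by_cases hzx : z = x
    · subst hzx; simp [hxy]
    · by_cases hzy : z = y
      · subst hzy; simp [hzx, Ne.symm hxy]
      · simp [hzx, hzy]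
  simp only [h, Finset.sum_add_distrib, Finset.sum_ite_eq', Finset.mem_univ, if_true]

theorem nonadjacent_twins_edge_derivative
    (G : SimpleGraph V) [DecidableRel G.Adj]
    (hdeg : ∀ z : V, 0 < G.degree z)
    (x y : V) (hne : x ≠ y) (hnadj : ¬ G.Adj x y)
    (htwin : G.neighborFinset x = G.neighborFinset y)
    (d : ℕ) (hdx : G.degree x = d) (hdy : G.degree y = d)
    (v : V → ℝ)
    (hv : ∀ z, v z = if z = x then 1 / Real.sqrt 2
      else if z = y then -(1 / Real.sqrt 2) else 0) :
    (normLap G).mulVec v = (1 : ℝ) • v ∧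
      edgeDeriv G v 1 x y = 1 / (d : ℝ) ∧
      ∀ (k : ℕ) (hk : 0 < k) (w : Fin k → V → ℝ),
        w ⟨0, hk⟩ = v →
        (∀ i j, (∑ z, w i z * w j z) = if i = j then 1 else 0) →
        (∀ i, (normLap G).mulVec (w i) = (1 : ℝ) • w i) →
        (1 / (k : ℝ)) * ∑ i, edgeDeriv G (w i) 1 x y ≤ 1 / ((k : ℝ) * d) := by
  have hd0 : 0 < d := hdx ▸ hdeg x
  have hdR : (0:ℝ) < (d:ℝ) := by exact_mod_cast hd0
  have hs2 : (0:ℝ) < Real.sqrt 2 := Real.sqrt_pos.mpr (by norm_num)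
  have h2 : Real.sqrt 2 * Real.sqrt 2 = 2 := Real.mul_self_sqrt (by norm_num)
  have hhalf : (1/Real.sqrt 2) * (1/Real.sqrt 2) = 1/2 := by
    rw [div_mul_div_comm, one_mul, h2]
  have hsq : Real.sqrt ((d:ℝ) * (d:ℝ)) = (d:ℝ) := Real.sqrt_mul_self hdR.le
  have hvx : v x = 1 / Real.sqrt 2 := by rw [hv]; simp
  have hvy : v y = -(1 / Real.sqrt 2) := by rw [hv]; simp [Ne.symm hne]
  have hnadj' : ¬ G.Adj y x := fun h => hnadj h.symm
  -- Part 1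
  have hLv : (normLap G).mulVec v = (1:ℝ) • v := by
    funext z
    rw [Pi.smul_apply, smul_eq_mul, one_mul]
    show ∑ u, normLap G z u * v u = v z
    have hsum : ∑ u, normLap G z u * v u
        = normLap G z x * (1/Real.sqrt 2) + normLap G z y * (-(1/Real.sqrt 2)) := by
      calc ∑ u, normLap G z u * v u
          = ∑ u, normLap G z u *
              (if u = x then 1/Real.sqrt 2 else if u = y then -(1/Real.sqrt 2) else 0) := by
            simp only [hv]
        _ = _ := sum_mul_pair x y hne _ _ _
    rw [hsum]
    by_cases hzx : z = x
    · subst hzx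
      simp [normLap, hne, hnadj, hvx]
    · by_cases hzy : z = y
      · subst hzy
        simp [normLap, Ne.symm hne, hnadj', hvy]
      · have hvz : v z = 0 := by rw [hv]; simp [hzx, hzy]
        rw [hvz]
        by_cases hadj : G.Adj z x
        · have hzy' : G.Adj z y := by
            have hx : z ∈ G.neighborFinset x := by
              rw [SimpleGraph.mem_neighborFinset]; exact hadj.symm
            rw [htwin, SimpleGraph.mem_neighborFinset] at hx
            exact hx.symm
          simp only [normLap, if_neg hzx, if_neg hzy, if_pos hadj, if_pos hzy', hdx, hdy]
          ring
        · have hzy' : ¬ G.Adj z y := by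
            intro h
            apply hadj
            have hy : z ∈ G.neighborFinset y := by
              rw [SimpleGraph.mem_neighborFinset]; exact h.symm
            rw [← htwin, SimpleGraph.mem_neighborFinset] at hy
            exact hy.symm
          simp [normLap, hzx, hzy, hadj, hzy']
  -- Part 2
  have hF : edgeDeriv G v 1 x y = 1 / (d:ℝ) := by
    unfold edgeDeriv
    rw [hdx, hdy, hsq, hvx, hvy, mul_neg, hhalf]
    ring
  refine ⟨hLv, hF, ?_⟩
  intro k hk w hw0 horth _
  set i0 : Fin k := ⟨0, hk⟩ with hi0
  have hkR : (0:ℝ) < (k:ℝ) := by exact_mod_cast hk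
  have hE : ∀ i, edgeDeriv G (w i) 1 x y = -2 * (w i x * w i y) / (d:ℝ) := by
    intro i
    unfold edgeDeriv
    rw [hdx, hdy, hsq]
    ring
  have hai : ∀ i, i ≠ i0 → w i x = w i y := by
    intro i hi
    have h := horth i i0
    rw [if_neg hi, hw0] at h
    have h' : ∑ z, w i z * v z
        = w i x * (1/Real.sqrt 2) + w i y * (-(1/Real.sqrt 2)) := by
      calc ∑ z, w i z * v z
          = ∑ z, w i z *
              (if z = x then 1/Real.sqrt 2 else if z = y then -(1/Real.sqrt 2) else 0) := by
            simp only [hv]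
        _ = _ := sum_mul_pair x y hne _ _ _
    rw [h'] at h
    have : (w i x - w i y) * (1/Real.sqrt 2) = 0 := by linarith [h]
    rcases mul_eq_zero.mp this with h1 | h1
    · linarith
    · exact absurd h1 (by positivity)
  have h0 : edgeDeriv G (w i0) 1 x y = 1 / (d:ℝ) := by rw [hw0]; exact hF
  have hrest : ∑ i ∈ Finset.univ.erase i0, edgeDeriv G (w i) 1 x y ≤ 0 := by
    apply Finset.sum_nonpos
    intro i hi
    have hine : i ≠ i0 := Finset.ne_of_mem_erase hi
    rw [hE i, ← hai i hine]
    apply div_nonpos_of_nonpos_of_nonneg _ hdR.le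
    nlinarith [mul_self_nonneg (w i x)]
  have hbound : ∑ i, edgeDeriv G (w i) 1 x y ≤ 1 / (d:ℝ) := by
    rw [← Finset.add_sum_erase Finset.univ _ (Finset.mem_univ i0), h0]
    linarith
  have hmul : (1/(k:ℝ)) * ∑ i, edgeDeriv G (w i) 1 x y ≤ (1/(k:ℝ)) * (1/(d:ℝ)) :=
    mul_le_mul_of_nonneg_left hbound (by positivity)
  calc (1/(k:ℝ)) * ∑ i, edgeDeriv G (w i) 1 x y
      ≤ (1/(k:ℝ)) * (1/(d:ℝ)) := hmul
    _ = 1 / ((k:ℝ) * (d:ℝ)) := by rw [div_mul_div_comm, one_mul]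
end

section
/- Let G be a finite simple graph in which every vertex has positive degree, and let x, y be distinct non-adjacent vertices with N(x) = N(y) (non-adjacent twins) and common degree d = d_x = d_y. If λ is an eigenvalue of the normalized Laplacian L with λ ≠ 1 and w is any eigenvector of L with eigenvalue λ, then the edge-derivative expression satisfies F(w, λ, {x,y}) ≤ 0. -/
open Finset

variable {V : Type*} [Fintype V] [DecidableEq V]

theorem nonadjacent_twins_other_eigenvalues_nonpositive
    (G : SimpleGraph V) [DecidableRel G.Adj]
    (hdeg : ∀ z : V, 0 < G.degree z)
    (x y : V) (hne : x ≠ y) (hnadj : ¬ G.Adj x y)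
    (htwin : G.neighborFinset x = G.neighborFinset y)
    (d : ℕ) (hdx : G.degree x = d) (hdy : G.degree y = d)
    (lam : ℝ) (hlam : lam ≠ 1)
    (w : V → ℝ) (hw0 : w ≠ 0)
    (heig : (normLap G).mulVec w = lam • w) :
    edgeDeriv G w lam x y ≤ 0 := by
  classical
  have hdpos : ∀ z : V, (0:ℝ) < (G.degree z : ℝ) := fun z => by exact_mod_cast hdeg z
  have hspos : ∀ z : V, 0 < Real.sqrt (G.degree z : ℝ) := fun z => Real.sqrt_pos.2 (hdpos z)
  -- row formula for the eigenvalue equation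
  have hrow : ∀ z : V, ∑ u ∈ G.neighborFinset z, w u / Real.sqrt (G.degree u : ℝ)
      = Real.sqrt (G.degree z : ℝ) * ((1 - lam) * w z) := by
    intro z
    have h := congrFun heig z
    have hsz := (hspos z).ne'
    have hmv : (normLap G).mulVec w z
        = w z - (∑ u ∈ G.neighborFinset z, w u / Real.sqrt (G.degree u : ℝ))
            / Real.sqrt (G.degree z : ℝ) := by
      have hpt : ∀ u : V, normLap G z u * w u
          = (if z = u then w u else 0)
            + (if G.Adj z u then
                -((w u / Real.sqrt (G.degree u : ℝ)) / Real.sqrt (G.degree z : ℝ)) else 0) := by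
        intro u
        unfold normLap
        by_cases hzu : z = u
        · subst hzu; simp [G.irrefl]
        · by_cases ha : G.Adj z u
          · rw [if_neg hzu, if_pos ha, if_neg hzu, if_pos ha,
              Real.sqrt_mul (le_of_lt (hdpos z)), zero_add, div_div]
            ring
          · simp [hzu, ha]
      have htail : ∑ u : V, (if G.Adj z u then
            -((w u / Real.sqrt (G.degree u : ℝ)) / Real.sqrt (G.degree z : ℝ)) else 0)
          = -((∑ u ∈ G.neighborFinset z, w u / Real.sqrt (G.degree u : ℝ))
              / Real.sqrt (G.degree z : ℝ)) := by
        rw [SimpleGraph.neighborFinset_eq_filter, Finset.sum_div, ← Finset.sum_neg_distrib,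
          Finset.sum_filter]
      calc (normLap G).mulVec w z = ∑ u : V, normLap G z u * w u := rfl
        _ = ∑ u : V, ((if z = u then w u else 0)
            + (if G.Adj z u then
                -((w u / Real.sqrt (G.degree u : ℝ)) / Real.sqrt (G.degree z : ℝ)) else 0)) :=
          Finset.sum_congr rfl (fun u _ => hpt u)
        _ = w z - (∑ u ∈ G.neighborFinset z, w u / Real.sqrt (G.degree u : ℝ))
            / Real.sqrt (G.degree z : ℝ) := by
          rw [Finset.sum_add_distrib, Finset.sum_ite_eq, if_pos (Finset.mem_univ z), htail]
          ring
    rw [hmv] at h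
    simp only [Pi.smul_apply, smul_eq_mul] at h
    have h' : (∑ u ∈ G.neighborFinset z, w u / Real.sqrt (G.degree u : ℝ))
        / Real.sqrt (G.degree z : ℝ) = (1 - lam) * w z := by linarith
    have h'' := (div_eq_iff hsz).mp h'
    rw [h'']; ring
  -- w x = w y
  have hxy : w x = w y := by
    have hx := hrow x
    have hy := hrow y
    rw [htwin] at hx
    rw [hx, hdx] at hy
    rw [hdy] at hy
    have h1 : Real.sqrt ((d:ℕ) : ℝ) ≠ 0 := by
      have := (hspos y).ne'; rwa [hdy] at this
    have h2 : (1 - lam) ≠ 0 := sub_ne_zero.2 (Ne.symm hlam)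
    exact mul_left_cancel₀ h2 (mul_left_cancel₀ h1 hy)
  -- sum of squares is positive
  have hS : 0 < ∑ z, w z ^ 2 := by
    obtain ⟨z0, hz0⟩ : ∃ z, w z ≠ 0 := by
      by_contra h; push_neg at h; exact hw0 (funext h)
    exact Finset.sum_pos' (fun z _ => sq_nonneg _)
      ⟨z0, Finset.mem_univ _, by positivity⟩
  -- quadratic form identity
  have hsd2 : ∀ z : V, Real.sqrt (G.degree z : ℝ) ^ 2 = (G.degree z : ℝ) :=
    fun z => Real.sq_sqrt (le_of_lt (hdpos z))
  have hinner : ∀ z : V, ∑ u ∈ G.neighborFinset z,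
      (w z / Real.sqrt (G.degree z : ℝ) - w u / Real.sqrt (G.degree u : ℝ))^2
      = (2*lam - 1) * w z ^ 2
        + ∑ u ∈ G.neighborFinset z, (w u / Real.sqrt (G.degree u : ℝ))^2 := by
    intro z
    have expand : ∀ u : V, (w z / Real.sqrt (G.degree z : ℝ) - w u / Real.sqrt (G.degree u : ℝ))^2
        = (w z / Real.sqrt (G.degree z : ℝ))^2
          - (2 * (w z / Real.sqrt (G.degree z : ℝ))) * (w u / Real.sqrt (G.degree u : ℝ))
          + (w u / Real.sqrt (G.degree u : ℝ))^2 := fun u => by ring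
    rw [Finset.sum_congr rfl (fun u _ => expand u), Finset.sum_add_distrib,
      Finset.sum_sub_distrib, Finset.sum_const, ← Finset.mul_sum,
      G.card_neighborFinset_eq_degree]
    have e1 : (G.degree z : ℕ) • (w z / Real.sqrt (G.degree z : ℝ))^2 = w z ^ 2 := by
      rw [nsmul_eq_mul, div_pow, hsd2, mul_div_cancel₀ _ (hdpos z).ne']
    have e2 : (2 * (w z / Real.sqrt (G.degree z : ℝ)))
        * (∑ u ∈ G.neighborFinset z, w u / Real.sqrt (G.degree u : ℝ))
        = 2 * (1 - lam) * w z ^ 2 := by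
      rw [hrow z]
      have h1 := (hspos z).ne'
      field_simp
    rw [e1, e2]; ring
  have hswap : ∑ z, ∑ u ∈ G.neighborFinset z, (w u / Real.sqrt (G.degree u : ℝ))^2
      = ∑ u, w u ^ 2 := by
    have h1 : ∀ z : V, ∑ u ∈ G.neighborFinset z, (w u / Real.sqrt (G.degree u : ℝ))^2
        = ∑ u, if G.Adj z u then (w u / Real.sqrt (G.degree u : ℝ))^2 else 0 := fun z => by
      rw [SimpleGraph.neighborFinset_eq_filter, Finset.sum_filter]
    rw [Finset.sum_congr rfl (fun z _ => h1 z), Finset.sum_comm]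
    refine Finset.sum_congr rfl (fun u _ => ?_)
    have h2 : ∑ z, (if G.Adj z u then (w u / Real.sqrt (G.degree u : ℝ))^2 else 0)
        = ∑ z ∈ G.neighborFinset u, (w u / Real.sqrt (G.degree u : ℝ))^2 := by
      rw [SimpleGraph.neighborFinset_eq_filter, Finset.sum_filter]
      exact Finset.sum_congr rfl (fun z _ => if_congr (G.adj_comm _ _) rfl rfl)
    rw [h2, Finset.sum_const, G.card_neighborFinset_eq_degree, nsmul_eq_mul, div_pow, hsd2,
      mul_div_cancel₀ _ (hdpos u).ne']
  have hQ : ∑ z, ∑ u ∈ G.neighborFinset z,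
      (w z / Real.sqrt (G.degree z : ℝ) - w u / Real.sqrt (G.degree u : ℝ))^2
      = (2 * lam) * ∑ z, w z ^ 2 := by
    rw [Finset.sum_congr rfl (fun z _ => hinner z), Finset.sum_add_distrib, hswap,
      ← Finset.mul_sum]
    ring
  have hQnn : (0:ℝ) ≤ (2 * lam) * ∑ z, w z ^ 2 := by
    rw [← hQ]
    exact Finset.sum_nonneg (fun z _ => Finset.sum_nonneg (fun u _ => sq_nonneg _))
  have hlamnn : 0 ≤ lam := by nlinarith
  -- finish
  unfold edgeDeriv
  rw [hdx, hdy, ← hxy, Real.sqrt_mul_self (by positivity : (0:ℝ) ≤ ((d:ℕ) : ℝ))]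
  have hd0 : (0:ℝ) < (d : ℝ) := by rw [← hdx]; exact hdpos x
  have e : (1 - lam) * (w x ^ 2 / (d:ℝ) + w x ^ 2 / (d:ℝ)) - 2 * (w x * w x) / (d:ℝ)
      = -(2 * (lam * w x ^ 2)) / (d:ℝ) := by ring
  rw [e]
  apply div_nonpos_of_nonpos_of_nonneg
  · nlinarith [sq_nonneg (w x)]
  · exact le_of_lt hd0
end
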